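/- Kernel estimate for the magnetic projector: let Π_L(x,y) = (1/√π) Σ_{k,q ∈ ℤ} exp( (i/2)(qL+x₁+y₁)(kL+x₂−y₂) + i q y₂ − (1/4)(kL+x₂−y₂)² − (1/4)(qL−x₁+y₁)² ). Then there is a universal constant C with sup_{x ∈ K_L} ∫_{K_L} |Π_L(x,y)| dy ≤ C for all L ≥ 1. -/

import Mathlib

open MeasureTheory

/-- The square `K_L = [−L/2, L/2]²`. -/
def Kset (L : ℝ) : Set (ℝ × ℝ) := Set.Icc (-(L / 2)) (L / 2) ×ˢ Set.Icc (-(L / 2)) (L / 2)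

/-- The kernel of the projector onto the finite-dimensional lowest Landau level:
`Π_L(x,y) = (1/√π) Σ_{k,q ∈ ℤ} exp((i/2)(qL+x₁+y₁)(kL+x₂−y₂) + i q y₂
  − (1/4)(kL+x₂−y₂)² − (1/4)(qL−x₁+y₁)²)`. -/
noncomputable def PiL (L : ℝ) (x y : ℝ × ℝ) : ℂ :=
  ((1 / Real.sqrt Real.pi : ℝ) : ℂ) * ∑' kq : ℤ × ℤ,
    Complex.exp ((Complex.I / 2) * ((kq.2 : ℂ) * (L : ℂ) + (x.1 : ℂ) + (y.1 : ℂ))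
        * ((kq.1 : ℂ) * (L : ℂ) + (x.2 : ℂ) - (y.2 : ℂ))
      + Complex.I * (kq.2 : ℂ) * (y.2 : ℂ)
      - (1 / 4) * ((kq.1 : ℂ) * (L : ℂ) + (x.2 : ℂ) - (y.2 : ℂ)) ^ 2
      - (1 / 4) * ((kq.2 : ℂ) * (L : ℂ) - (x.1 : ℂ) + (y.1 : ℂ)) ^ 2)

/-! Each summand of `Π_L(x, y)` has modulus `g(qL − x₁ + y₁) g(kL + x₂ − y₂)` with
`g t = exp(−t²/4)`. Working with lower Lebesgue integrals, Tonelli factors the bound into two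
one-dimensional sums `Σ_k ∫_{−L/2}^{L/2} g(kL + c ∓ t) dt`; since the translates of `[−L/2, L/2]`
by `ℤL` tile the line, each equals `∫_ℝ g = 2√π`, whence the bound `4π / √π = 4√π`. -/

open Set Real
open scoped ENNReal

theorem tsum_setLIntegral_Icc_add_zsmul (f : ℝ → ℝ≥0∞) {a b : ℝ} (hab : a < b) :
    ∑' n : ℤ, ∫⁻ x in Icc a b, f (x + n • (b - a)) = ∫⁻ x, f x := by
  rw [← setLIntegral_univ, ← iUnion_Ioc_add_zsmul (sub_pos.2 hab) a,
    lintegral_iUnion (fun _ => measurableSet_Ioc) (pairwise_disjoint_Ioc_add_zsmul a (b - a))]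
  refine tsum_congr fun n => ?_
  rw [setLIntegral_congr Ioc_ae_eq_Icc.symm,
    ← (measurePreserving_add_right volume (n • (b - a))).setLIntegral_comp_preimage_emb
      (measurableEmbedding_addRight _) f, preimage_add_const_Ioc]
  congr 3 <;> module

noncomputable def gauss (t : ℝ) : ℝ := exp (-(1 / 4) * t ^ 2)

theorem gauss_nonneg (t : ℝ) : 0 ≤ gauss t := (exp_pos _).le

@[fun_prop]
theorem measurable_gauss : Measurable gauss := by
  unfold gauss; fun_prop

theorem gauss_neg (t : ℝ) : gauss (-t) = gauss t := by
  simp [gauss]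

theorem lintegral_gauss : ∫⁻ t, ENNReal.ofReal (gauss t) = ENNReal.ofReal (2 * √π) := by
  simp only [gauss]
  rw [← ofReal_integral_eq_lintegral_ofReal (integrable_exp_neg_mul_sq (by norm_num))
    (ae_of_all _ fun _ => (exp_pos _).le), integral_gaussian,
    show π / (1 / 4) = 2 ^ 2 * π by ring, sqrt_mul (by norm_num), sqrt_sq (by norm_num)]

theorem tsum_setLIntegral_Icc_gauss_add {L : ℝ} (hL : 0 < L) (c : ℝ) :
    ∑' n : ℤ, ∫⁻ y in Icc (-(L / 2)) (L / 2), ENNReal.ofReal (gauss (n * L - c + y))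
      = ENNReal.ofReal (2 * √π) := by
  have h := tsum_setLIntegral_Icc_add_zsmul (fun t => ENNReal.ofReal (gauss (t - c)))
    (show -(L / 2) < L / 2 by linarith)
  rw [lintegral_sub_right_eq_self (fun t => ENNReal.ofReal (gauss t)), lintegral_gauss,
    sub_neg_eq_add, add_halves] at h
  rw [← h]
  congr! 4 with n y
  rw [zsmul_eq_mul]
  ring_nf

theorem tsum_setLIntegral_Icc_gauss_sub {L : ℝ} (hL : 0 < L) (c : ℝ) :
    ∑' n : ℤ, ∫⁻ y in Icc (-(L / 2)) (L / 2), ENNReal.ofReal (gauss (n * L + c - y))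
      = ENNReal.ofReal (2 * √π) := by
  rw [← (Equiv.neg ℤ).tsum_eq, ← tsum_setLIntegral_Icc_gauss_add hL c]
  congr! 4 with n y
  rw [Equiv.neg_apply, Int.cast_neg, ← gauss_neg]
  ring_nf

noncomputable def PiLSummand (L : ℝ) (x y : ℝ × ℝ) (kq : ℤ × ℤ) : ℂ :=
  Complex.exp ((Complex.I / 2) * ((kq.2 : ℂ) * (L : ℂ) + (x.1 : ℂ) + (y.1 : ℂ))
        * ((kq.1 : ℂ) * (L : ℂ) + (x.2 : ℂ) - (y.2 : ℂ))
      + Complex.I * (kq.2 : ℂ) * (y.2 : ℂ)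
      - (1 / 4) * ((kq.1 : ℂ) * (L : ℂ) + (x.2 : ℂ) - (y.2 : ℂ)) ^ 2
      - (1 / 4) * ((kq.2 : ℂ) * (L : ℂ) - (x.1 : ℂ) + (y.1 : ℂ)) ^ 2)

theorem PiL_eq_tsum (L : ℝ) (x y : ℝ × ℝ) :
    PiL L x y = ((1 / √π : ℝ) : ℂ) * ∑' kq, PiLSummand L x y kq := rfl

theorem norm_PiLSummand (L : ℝ) (x y : ℝ × ℝ) (k q : ℤ) :
    ‖PiLSummand L x y (k, q)‖ = gauss (q * L - x.1 + y.1) * gauss (k * L + x.2 - y.2) := by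
  have hsplit : PiLSummand L x y (k, q)
      = Complex.exp ((-(1 / 4) * (q * L - x.1 + y.1) ^ 2 + -(1 / 4) * (k * L + x.2 - y.2) ^ 2 : ℝ))
        * Complex.exp (((q * L + x.1 + y.1) * (k * L + x.2 - y.2) / 2 + q * y.2 : ℝ)
          * Complex.I) := by
    rw [PiLSummand, ← Complex.exp_add]
    push_cast
    ring_nf
  rw [hsplit, norm_mul, Complex.norm_exp_ofReal, Complex.norm_exp_ofReal_mul_I, mul_one, exp_add,
    gauss, gauss]

theorem enorm_PiL_le (L : ℝ) (x y : ℝ × ℝ) :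
    ‖PiL L x y‖ₑ ≤ ENNReal.ofReal (1 / √π) * ∑' kq : ℤ × ℤ,
      ENNReal.ofReal (gauss (kq.2 * L - x.1 + y.1))
        * ENNReal.ofReal (gauss (kq.1 * L + x.2 - y.2)) := by
  rw [PiL_eq_tsum, enorm_mul, ← ofReal_norm, Complex.norm_real,
    Real.norm_of_nonneg (by positivity)]
  gcongr
  refine enorm_tsum_le_tsum_enorm.trans_eq (tsum_congr fun kq => ?_)
  rw [← ofReal_norm, norm_PiLSummand, ENNReal.ofReal_mul (gauss_nonneg _)]

theorem setLIntegral_Kset_gauss_mul (L : ℝ) (x : ℝ × ℝ) (k q : ℤ) :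
    ∫⁻ y in Kset L,
      ENNReal.ofReal (gauss (q * L - x.1 + y.1)) * ENNReal.ofReal (gauss (k * L + x.2 - y.2))
    = (∫⁻ t in Icc (-(L / 2)) (L / 2), ENNReal.ofReal (gauss (q * L - x.1 + t)))
      * ∫⁻ t in Icc (-(L / 2)) (L / 2), ENNReal.ofReal (gauss (k * L + x.2 - t)) := by
  rw [Kset, Measure.volume_eq_prod, ← Measure.prod_restrict]
  exact lintegral_prod_mul (f := fun t => ENNReal.ofReal (gauss (q * L - x.1 + t)))
    (g := fun t => ENNReal.ofReal (gauss (k * L + x.2 - t))) (by fun_prop) (by fun_prop)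

theorem lintegral_enorm_PiL_le {L : ℝ} (hL : 0 < L) (x : ℝ × ℝ) :
    ∫⁻ y in Kset L, ‖PiL L x y‖ₑ ≤ ENNReal.ofReal (4 * √π) := by
  calc ∫⁻ y in Kset L, ‖PiL L x y‖ₑ
      ≤ ∫⁻ y in Kset L, ENNReal.ofReal (1 / √π) * ∑' kq : ℤ × ℤ,
          ENNReal.ofReal (gauss (kq.2 * L - x.1 + y.1))
            * ENNReal.ofReal (gauss (kq.1 * L + x.2 - y.2)) :=
        lintegral_mono fun y => enorm_PiL_le L x y
    _ = ENNReal.ofReal (1 / √π) * ∑' kq : ℤ × ℤ,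
          (∫⁻ t in Icc (-(L / 2)) (L / 2), ENNReal.ofReal (gauss (kq.1 * L + x.2 - t)))
            * ∫⁻ t in Icc (-(L / 2)) (L / 2), ENNReal.ofReal (gauss (kq.2 * L - x.1 + t)) := by
        rw [lintegral_const_mul _ (by fun_prop), lintegral_tsum fun _ => by fun_prop]
        refine congrArg _ (tsum_congr fun kq => ?_)
        rw [setLIntegral_Kset_gauss_mul, mul_comm]
    _ = ENNReal.ofReal (1 / √π) * (ENNReal.ofReal (2 * √π) * ENNReal.ofReal (2 * √π)) := by
        simp only [ENNReal.tsum_prod', ENNReal.tsum_mul_left, tsum_setLIntegral_Icc_gauss_add hL,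
          ENNReal.tsum_mul_right, tsum_setLIntegral_Icc_gauss_sub hL]
    _ = ENNReal.ofReal (4 * √π) := by
        rw [← ENNReal.ofReal_mul (by positivity), ← ENNReal.ofReal_mul (by positivity)]
        congr 1
        have hπ : 0 < √π := sqrt_pos.2 pi_pos
        field_simp
        ring

/-- kernel estimate for the magnetic projector: there is a universal
constant `C` with `sup_{x ∈ K_L} ∫_{K_L} |Π_L(x,y)| dy ≤ C` for all `L ≥ 1`. -/
theorem stmt13 : ∃ C : ℝ, 0 < C ∧
    ∀ L : ℝ, 1 ≤ L → ∀ x ∈ Kset L, (∫ y in Kset L, ‖PiL L x y‖) ≤ C := by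
  refine ⟨4 * √π, by positivity, fun L hL x _ => ?_⟩
  calc (∫ y in Kset L, ‖PiL L x y‖)
      ≤ (∫⁻ y in Kset L, ‖PiL L x y‖ₑ).toReal := by
        simpa only [norm_norm, ofReal_norm] using
          (le_abs_self _).trans (norm_integral_le_lintegral_norm fun y => ‖PiL L x y‖)
    _ ≤ 4 * √π :=
        ENNReal.toReal_le_of_le_ofReal (by positivity) (lintegral_enorm_PiL_le (by linarith) x)
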